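/- Let A1 := A^{(1)}[(5,6,7)→(2,3,4)], A2 := A^{(2)}[(1,6,7)→(5,3,4)], A3 := A^{(3)}[(1,2,7)→(5,6,4)], A4 := A^{(4)}[(1,2,3)→(5,6,7)], and let M := (A1)_{123}·(A2)_{145}·(A3)_{246}·(A4)_{356} be the 6×6 matrix of the left-hand side of the heptagon relation, where M_{rst} denotes the 6×6 matrix acting as M on coordinates (r,s,t) and as the identity elsewhere. Then for every edge {a,b} ⊆ {1,…,7} (a ≠ b), the row of boundary input components of the edge vector is mapped to the row of boundary output components: (e_{ab}(u_{15}), e_{ab}(u_{16}), e_{ab}(u_{17}), e_{ab}(u_{26}), e_{ab}(u_{27}), e_{ab}(u_{37})) · M = (e_{ab}(u_{25}), e_{ab}(u_{35}), e_{ab}(u_{45}), e_{ab}(u_{36}), e_{ab}(u_{46}), e_{ab}(u_{47})), where u_{pq} := {1,…,7}\{p,q}. -/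

import Mathlib

/-!
For fixed `p` the brackets `[u v] := d_{u v p}` are alternating and satisfy the three-term
Plücker relation, so `v ↦ d_{a v p} d_{b v p}` behaves like a binary quadratic form, which is
determined by its values at three points. The matrix `A^{(p)}[(i₁,i₂,i₃)→(o₁,o₂,o₃)]` is the
Lagrange interpolation matrix computing its values at the `oₖ` from those at the `iₖ`. Since
`e_{ab}(u_{pq}) = d_{apq} d_{bpq}`, each factor of `M` replaces the three components `{iₖ, p}`
of the edge vector by `{oₖ, p}`, and the four factors move the input edges to the output edges.
-/

/-- The determinant `d_{ijk}` built from the columns `(α_i,β_i,γ_i)`, `(α_j,β_j,γ_j)`,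
`(α_k,β_k,γ_k)`. -/
noncomputable def dd {F : Type*} [Field F] (al be ga : Fin 7 → F) (i j k : Fin 7) : F :=
  Matrix.det !![al i, al j, al k; be i, be j, be k; ga i, ga j, ga k]

/-- The ansatz matrix `A^{(p)}[(i₁,i₂,i₃)→(o₁,o₂,o₃)]`. -/
noncomputable def ansatz {F : Type*} [Field F] (al be ga : Fin 7 → F) (p : Fin 7)
    (inp out : Fin 3 → Fin 7) : Matrix (Fin 3) (Fin 3) F := fun a b =>
  dd al be ga (inp (a + 1)) (out b) p * dd al be ga (inp (a + 2)) (out b) p /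
    (dd al be ga (inp a) (inp (a + 1)) p * dd al be ga (inp a) (inp (a + 2)) p)

/-- `embed3 p0 p1 p2 M` is the 6×6 matrix acting as the 3×3 matrix `M` on the
coordinates `(p0,p1,p2)` and as the identity on the remaining coordinates. -/
noncomputable def embed3 {F : Type*} [Field F] (p0 p1 p2 : Fin 6)
    (M : Matrix (Fin 3) (Fin 3) F) : Matrix (Fin 6) (Fin 6) F := fun r c =>
  if r = p0 then (if c = p0 then M 0 0 else if c = p1 then M 0 1 else if c = p2 then M 0 2 else 0)
  else if r = p1 then
    (if c = p0 then M 1 0 else if c = p1 then M 1 1 else if c = p2 then M 1 2 else 0)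
  else if r = p2 then
    (if c = p0 then M 2 0 else if c = p1 then M 2 1 else if c = p2 then M 2 2 else 0)
  else if r = c then 1 else 0

/-- The edge vector `e_{ab}` evaluated at a subset `u ⊆ {1,…,7}`. -/
noncomputable def eVec {F : Type*} [Field F] (al be ga : Fin 7 → F) (a b : Fin 7)
    (u : Finset (Fin 7)) : F :=
  if a ∈ u ∧ b ∈ u then
    dd al be ga a ((uᶜ.sort (· ≤ ·)).getD 0 a) ((uᶜ.sort (· ≤ ·)).getD 1 a) *
      dd al be ga b ((uᶜ.sort (· ≤ ·)).getD 0 a) ((uᶜ.sort (· ≤ ·)).getD 1 a)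
  else 0

/-- `u_{pq} := {1,…,7} \ {p,q}`. -/
def uComp (p q : Fin 7) : Finset (Fin 7) := ({p, q} : Finset (Fin 7))ᶜ

open Matrix

section Bracket

variable {ι F : Type*} [Field F] {D : ι → ι → F}

theorem quadratic_interpolation (hanti : ∀ u v, D v u = -D u v)
    (hpl : ∀ x y z w, D x y * D z w - D x z * D y w + D x w * D y z = 0)
    {i₁ i₂ i₃ : ι} (h₁₂ : D i₁ i₂ ≠ 0) (h₁₃ : D i₁ i₃ ≠ 0) (h₂₃ : D i₂ i₃ ≠ 0) (x y o : ι) :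
    D x i₁ * D y i₁ * (D i₂ o * D i₃ o / (D i₁ i₂ * D i₁ i₃)) +
        D x i₂ * D y i₂ * (D i₃ o * D i₁ o / (D i₂ i₃ * D i₂ i₁)) +
        D x i₃ * D y i₃ * (D i₁ o * D i₂ o / (D i₃ i₁ * D i₃ i₂)) =
      D x o * D y o := by
  have hx := hpl x i₁ i₂ i₃
  have hy := hpl y i₁ i₂ i₃
  have ho := hpl i₁ i₂ i₃ o
  have hxo := hpl x i₁ i₂ o
  have hyo := hpl y i₂ i₃ o
  rw [hanti i₁ i₂, hanti i₁ i₃, hanti i₂ i₃]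
  field_simp
  -- `hxo` and `hyo` interpolate `D x o` and `D y o` linearly; what remains is `D i₂ o` times
  -- a combination of the three-term relations `hx`, `hy`, `ho`.
  linear_combination -(D i₁ i₃ * D y o * D i₂ i₃) * hxo
    - (D i₁ i₃ * (D x i₂ * D i₁ o - D x i₁ * D i₂ o)) * hyo
    + (D i₂ o * D y i₃ * D i₁ o) * hx + (D i₂ o * D x i₁ * D i₃ o) * hy
    - (D i₂ o * D x i₁ * D y i₃) * ho

end Bracket

section Determinant

variable {F : Type*} [Field F] (al be ga : Fin 7 → F)

theorem dd_eq (i j k : Fin 7) :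
    dd al be ga i j k =
      al i * be j * ga k - al i * be k * ga j - al j * be i * ga k +
        al j * be k * ga i + al k * be i * ga j - al k * be j * ga i := by
  rw [dd, det_fin_three]
  rfl

theorem dd_swap (i j k : Fin 7) : dd al be ga j i k = -dd al be ga i j k := by
  simp only [dd_eq]; ring

theorem dd_self_left (i k : Fin 7) : dd al be ga i i k = 0 := by
  simp only [dd_eq]; ring

theorem dd_self_right (i j : Fin 7) : dd al be ga i j i = 0 := by
  simp only [dd_eq]; ring

theorem dd_mul_dd_swap (a b s t : Fin 7) :
    dd al be ga a t s * dd al be ga b t s = dd al be ga a s t * dd al be ga b s t := by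
  simp only [dd_eq]; ring

theorem dd_pluecker (p x y z w : Fin 7) :
    dd al be ga x y p * dd al be ga z w p - dd al be ga x z p * dd al be ga y w p
      + dd al be ga x w p * dd al be ga y z p = 0 := by
  simp only [dd_eq]; ring

end Determinant

theorem uComp_comm (p q : Fin 7) : uComp p q = uComp q p := by
  rw [uComp, uComp, Finset.pair_comm]

section EdgeVector

variable {F : Type*} [Field F] (al be ga : Fin 7 → F) (a b : Fin 7)

theorem eVec_uComp_of_lt {s t : Fin 7} (hst : s < t) :
    eVec al be ga a b (uComp s t) = dd al be ga a s t * dd al be ga b s t := by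
  have hsort : (uComp s t)ᶜ.sort (· ≤ ·) = [s, t] := by
    rw [uComp, compl_compl, Finset.sort_insert _ (by simpa using hst.le) (by simpa using hst.ne),
      Finset.sort_singleton]
  rw [eVec, hsort]
  split_ifs with h
  · rfl
  · have : a = s ∨ a = t ∨ b = s ∨ b = t := by
      simp only [uComp, Finset.mem_compl, Finset.mem_insert, Finset.mem_singleton] at h
      tauto
    rcases this with rfl | rfl | rfl | rfl <;>
      simp [dd_self_left, dd_self_right]

theorem eVec_uComp {s t : Fin 7} (hst : s ≠ t) :
    eVec al be ga a b (uComp s t) = dd al be ga a s t * dd al be ga b s t := by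
  rcases hst.lt_or_gt with h | h
  · exact eVec_uComp_of_lt al be ga a b h
  · rw [uComp_comm, eVec_uComp_of_lt al be ga a b h, dd_mul_dd_swap]

end EdgeVector

section Embedding

variable {F : Type*} [Field F] {p₀ p₁ p₂ : Fin 6} (M : Matrix (Fin 3) (Fin 3) F)

theorem embed3_apply_of_mem (hp : Function.Injective ![p₀, p₁, p₂]) (r : Fin 6) (j : Fin 3) :
    embed3 p₀ p₁ p₂ M r (![p₀, p₁, p₂] j) = ∑ i, if r = ![p₀, p₁, p₂] i then M i j else 0 := by
  have h₀₁ : p₀ ≠ p₁ := hp.ne (by decide : (0 : Fin 3) ≠ 1)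
  have h₀₂ : p₀ ≠ p₂ := hp.ne (by decide : (0 : Fin 3) ≠ 2)
  have h₁₂ : p₁ ≠ p₂ := hp.ne (by decide : (1 : Fin 3) ≠ 2)
  fin_cases j <;> by_cases r₀ : r = p₀ <;> by_cases r₁ : r = p₁ <;> by_cases r₂ : r = p₂ <;>
    simp_all [embed3, Fin.sum_univ_three, Ne.symm h₀₁, Ne.symm h₀₂, Ne.symm h₁₂]

theorem embed3_apply_of_not_mem {c : Fin 6} (h₀ : c ≠ p₀) (h₁ : c ≠ p₁) (h₂ : c ≠ p₂)
    (r : Fin 6) : embed3 p₀ p₁ p₂ M r c = (1 : Matrix (Fin 6) (Fin 6) F) r c := by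
  by_cases r₀ : r = p₀ <;> by_cases r₁ : r = p₁ <;> by_cases r₂ : r = p₂ <;>
    simp_all [embed3, one_apply, Ne.symm h₀, Ne.symm h₁, Ne.symm h₂]

theorem vecMul_embed3_apply_of_mem (hp : Function.Injective ![p₀, p₁, p₂]) (v : Fin 6 → F)
    (j : Fin 3) :
    (v ᵥ* embed3 p₀ p₁ p₂ M) (![p₀, p₁, p₂] j) = ((fun i => v (![p₀, p₁, p₂] i)) ᵥ* M) j := by
  simp only [vecMul, dotProduct, embed3_apply_of_mem M hp, Finset.mul_sum, mul_ite,
    mul_zero]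
  rw [Finset.sum_comm]
  simp only [Finset.sum_ite_eq', Finset.mem_univ, if_true]

theorem vecMul_embed3_apply_of_not_mem {c : Fin 6} (h₀ : c ≠ p₀) (h₁ : c ≠ p₁) (h₂ : c ≠ p₂)
    (v : Fin 6 → F) : (v ᵥ* embed3 p₀ p₁ p₂ M) c = v c := by
  simp only [vecMul, dotProduct, embed3_apply_of_not_mem M h₀ h₁ h₂]
  exact congrFun (vecMul_one v) c

end Embedding

section Ansatz

variable {F : Type*} [Field F] (al be ga : Fin 7 → F)

theorem vecMul_ansatz (p : Fin 7) {inp : Fin 3 → Fin 7} (out : Fin 3 → Fin 7)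
    (h₀₁ : dd al be ga (inp 0) (inp 1) p ≠ 0) (h₀₂ : dd al be ga (inp 0) (inp 2) p ≠ 0)
    (h₁₂ : dd al be ga (inp 1) (inp 2) p ≠ 0) (x y : Fin 7) :
    (fun k => dd al be ga x (inp k) p * dd al be ga y (inp k) p) ᵥ* ansatz al be ga p inp out =
      fun k => dd al be ga x (out k) p * dd al be ga y (out k) p := by
  ext k
  simp only [vecMul, dotProduct, Fin.sum_univ_three, ansatz]
  exact quadratic_interpolation (fun u v => dd_swap al be ga u v p)
    (fun x y z w => dd_pluecker al be ga p x y z w) h₀₁ h₀₂ h₁₂ x y (out k)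

end Ansatz

noncomputable def edgeRow {F : Type*} [Field F] (al be ga : Fin 7 → F) (a b : Fin 7)
    (P : Fin 6 → Fin 7 × Fin 7) : Fin 6 → F :=
  fun c => eVec al be ga a b (uComp (P c).1 (P c).2)

section Move

variable {F : Type*} [Field F] {al be ga : Fin 7 → F} {a b : Fin 7}

theorem edgeRow_apply_of_pair {P : Fin 6 → Fin 7 × Fin 7} {c : Fin 6} {i p : Fin 7}
    (hip : i ≠ p) (hc : P c = (i, p) ∨ P c = (p, i)) :
    edgeRow al be ga a b P c = dd al be ga a i p * dd al be ga b i p := by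
  rcases hc with hc | hc <;> rw [edgeRow, hc]
  · exact eVec_uComp al be ga a b hip
  · rw [uComp_comm]; exact eVec_uComp al be ga a b hip

/-- Multiplying by `(A^{(p)})_{p₀p₁p₂}` replaces the edges `{iₖ, p}` of a row sitting at the
positions `pₖ` by the edges `{oₖ, p}`. -/
theorem edgeRow_vecMul_embed3_ansatz
    (hgen : ∀ i j k : Fin 7, i ≠ j → i ≠ k → j ≠ k → dd al be ga i j k ≠ 0)
    {p₀ p₁ p₂ : Fin 6} {p : Fin 7} {inp out : Fin 3 → Fin 7} {P P' : Fin 6 → Fin 7 × Fin 7}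
    (hpos : Function.Injective ![p₀, p₁, p₂] := by decide)
    (hinp : Function.Injective (Fin.cons p inp : Fin 4 → Fin 7) := by decide)
    (hout : ∀ k, out k ≠ p := by decide)
    (hP : ∀ k, P (![p₀, p₁, p₂] k) = (inp k, p) ∨ P (![p₀, p₁, p₂] k) = (p, inp k) := by decide)
    (hP' : ∀ k, P' (![p₀, p₁, p₂] k) = (out k, p) ∨ P' (![p₀, p₁, p₂] k) = (p, out k) := by
      decide)
    (hrest : ∀ c, c ≠ p₀ → c ≠ p₁ → c ≠ p₂ → P' c = P c := by decide) :
    edgeRow al be ga a b P ᵥ* embed3 p₀ p₁ p₂ (ansatz al be ga p inp out) =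
      edgeRow al be ga a b P' := by
  have hinp_ne (k : Fin 3) : inp k ≠ p := fun h => by
    simpa using hinp.ne (Fin.succ_ne_zero k) (by simpa using h)
  have hbracket (k l : Fin 3) (hkl : k ≠ l) : dd al be ga (inp k) (inp l) p ≠ 0 :=
    hgen _ _ _ (by simpa using hinp.ne ((Fin.succ_injective 3).ne hkl)) (hinp_ne k) (hinp_ne l)
  ext c
  by_cases hc : c = p₀ ∨ c = p₁ ∨ c = p₂
  · obtain ⟨j, rfl⟩ : ∃ j, ![p₀, p₁, p₂] j = c := by
      rcases hc with rfl | rfl | rfl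
      exacts [⟨0, rfl⟩, ⟨1, rfl⟩, ⟨2, rfl⟩]
    have hrow : (fun k => edgeRow al be ga a b P (![p₀, p₁, p₂] k)) =
        fun k => dd al be ga a (inp k) p * dd al be ga b (inp k) p :=
      funext fun k => edgeRow_apply_of_pair (hinp_ne k) (hP k)
    rw [vecMul_embed3_apply_of_mem _ hpos, hrow,
      vecMul_ansatz al be ga p out (hbracket 0 1 (by decide)) (hbracket 0 2 (by decide))
        (hbracket 1 2 (by decide)), edgeRow_apply_of_pair (hout j) (hP' j)]
  · obtain ⟨h₀, h₁, h₂⟩ : c ≠ p₀ ∧ c ≠ p₁ ∧ c ≠ p₂ := by simpa only [not_or] using hc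
    rw [vecMul_embed3_apply_of_not_mem _ h₀ h₁ h₂, edgeRow, edgeRow, hrest c h₀ h₁ h₂]

end Move

/-- Vertices `1,…,7` are encoded as `0,…,6 : Fin 7`, positions `1,…,6` as `0,…,5 : Fin 6`. -/
theorem heptagon_lhs_maps_edgeVector_boundary_general {F : Type*} [Field F] (al be ga : Fin 7 → F)
    (hgen : ∀ i j k : Fin 7, i ≠ j → i ≠ k → j ≠ k → dd al be ga i j k ≠ 0)
    (a b : Fin 7) :
    Matrix.vecMul
        ![eVec al be ga a b (uComp 0 4), eVec al be ga a b (uComp 0 5),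
          eVec al be ga a b (uComp 0 6), eVec al be ga a b (uComp 1 5),
          eVec al be ga a b (uComp 1 6), eVec al be ga a b (uComp 2 6)]
        (embed3 0 1 2 (ansatz al be ga 0 ![4, 5, 6] ![1, 2, 3]) *
          embed3 0 3 4 (ansatz al be ga 1 ![0, 5, 6] ![4, 2, 3]) *
          embed3 1 3 5 (ansatz al be ga 2 ![0, 1, 6] ![4, 5, 3]) *
          embed3 2 4 5 (ansatz al be ga 3 ![0, 1, 2] ![4, 5, 6])) =
      ![eVec al be ga a b (uComp 1 4), eVec al be ga a b (uComp 2 4),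
        eVec al be ga a b (uComp 3 4), eVec al be ga a b (uComp 2 5),
        eVec al be ga a b (uComp 3 5), eVec al be ga a b (uComp 3 6)] := by
  set R := edgeRow al be ga a b
  have hin : ![eVec al be ga a b (uComp 0 4), eVec al be ga a b (uComp 0 5),
      eVec al be ga a b (uComp 0 6), eVec al be ga a b (uComp 1 5),
      eVec al be ga a b (uComp 1 6), eVec al be ga a b (uComp 2 6)] =
      R ![(0, 4), (0, 5), (0, 6), (1, 5), (1, 6), (2, 6)] := by
    ext c; fin_cases c <;> rfl
  have hout : ![eVec al be ga a b (uComp 1 4), eVec al be ga a b (uComp 2 4),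
      eVec al be ga a b (uComp 3 4), eVec al be ga a b (uComp 2 5),
      eVec al be ga a b (uComp 3 5), eVec al be ga a b (uComp 3 6)] =
      R ![(1, 4), (2, 4), (3, 4), (2, 5), (3, 5), (3, 6)] := by
    ext c; fin_cases c <;> rfl
  have h₁ : R ![(0, 4), (0, 5), (0, 6), (1, 5), (1, 6), (2, 6)] ᵥ*
      embed3 0 1 2 (ansatz al be ga 0 ![4, 5, 6] ![1, 2, 3]) =
      R ![(0, 1), (0, 2), (0, 3), (1, 5), (1, 6), (2, 6)] :=
    edgeRow_vecMul_embed3_ansatz hgen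
  have h₂ : R ![(0, 1), (0, 2), (0, 3), (1, 5), (1, 6), (2, 6)] ᵥ*
      embed3 0 3 4 (ansatz al be ga 1 ![0, 5, 6] ![4, 2, 3]) =
      R ![(1, 4), (0, 2), (0, 3), (1, 2), (1, 3), (2, 6)] :=
    edgeRow_vecMul_embed3_ansatz hgen
  have h₃ : R ![(1, 4), (0, 2), (0, 3), (1, 2), (1, 3), (2, 6)] ᵥ*
      embed3 1 3 5 (ansatz al be ga 2 ![0, 1, 6] ![4, 5, 3]) =
      R ![(1, 4), (2, 4), (0, 3), (2, 5), (1, 3), (2, 3)] :=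
    edgeRow_vecMul_embed3_ansatz hgen
  have h₄ : R ![(1, 4), (2, 4), (0, 3), (2, 5), (1, 3), (2, 3)] ᵥ*
      embed3 2 4 5 (ansatz al be ga 3 ![0, 1, 2] ![4, 5, 6]) =
      R ![(1, 4), (2, 4), (3, 4), (2, 5), (3, 5), (3, 6)] :=
    edgeRow_vecMul_embed3_ansatz hgen
  rw [hin, hout, ← vecMul_vecMul, ← vecMul_vecMul, ← vecMul_vecMul, h₁, h₂, h₃, h₄]

/-- The 6×6 matrix `M = (A1)_{123}(A2)_{145}(A3)_{246}(A4)_{356}` (the left-hand side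
of the heptagon relation) carries, for every edge `{a,b}`, the row of boundary input
components `(e_{ab}(u_{15}),…,e_{ab}(u_{37}))` of the edge vector to the row of
boundary output components `(e_{ab}(u_{25}),…,e_{ab}(u_{47}))`.
Vertices `1,…,7` are encoded as `0,…,6 : Fin 7`, positions `1,…,6` as `0,…,5 : Fin 6`. -/
theorem heptagon_lhs_maps_edgeVector_boundary {F : Type*} [Field F] (al be ga : Fin 7 → F)
    (hgen : ∀ i j k : Fin 7, i ≠ j → i ≠ k → j ≠ k → dd al be ga i j k ≠ 0)
    (a b : Fin 7) (hab : a ≠ b) :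
    Matrix.vecMul
        ![eVec al be ga a b (uComp 0 4), eVec al be ga a b (uComp 0 5),
          eVec al be ga a b (uComp 0 6), eVec al be ga a b (uComp 1 5),
          eVec al be ga a b (uComp 1 6), eVec al be ga a b (uComp 2 6)]
        (embed3 0 1 2 (ansatz al be ga 0 ![4, 5, 6] ![1, 2, 3]) *
          embed3 0 3 4 (ansatz al be ga 1 ![0, 5, 6] ![4, 2, 3]) *
          embed3 1 3 5 (ansatz al be ga 2 ![0, 1, 6] ![4, 5, 3]) *
          embed3 2 4 5 (ansatz al be ga 3 ![0, 1, 2] ![4, 5, 6])) =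
      ![eVec al be ga a b (uComp 1 4), eVec al be ga a b (uComp 2 4),
        eVec al be ga a b (uComp 3 4), eVec al be ga a b (uComp 2 5),
        eVec al be ga a b (uComp 3 5), eVec al be ga a b (uComp 3 6)] :=
  heptagon_lhs_maps_edgeVector_boundary_general al be ga hgen a b
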